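/- In a q-matroid M=(E,ρ) with collection of cyclic flats Z(M), a subspace V is independent if and only if dim(V ∩ Z) ≤ ρ(Z) for every cyclic flat Z ∈ Z(M). -/

import Mathlib

/-!
If `V` is dependent it contains a circuit `C`. Enlarging `C` maximally without raising its rank
gives a flat `W`, and the sum `Z` of the circuits inside `W` is again a flat: a vector outside `Z`
that does not raise its rank lies in `W` and produces a circuit in `W` not contained in `Z`. Then
`Z` is a cyclic flat with `ρ Z ≤ ρ C < dim C ≤ dim (V ∩ Z)`. Conversely, `V ∩ Z` is independent
when `V` is, so `dim (V ∩ Z) = ρ (V ∩ Z) ≤ ρ Z`.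
-/

open Submodule Module

namespace QM

variable (F : Type*) {E : Type*} [Field F] [AddCommGroup E] [Module F E]

/-- The rank axioms (R1)-(R3) of a q-matroid. -/
def IsRkFn (ρ : Submodule F E → ℕ) : Prop :=
  (∀ V : Submodule F E, ρ V ≤ finrank F V) ∧
  (∀ ⦃V W : Submodule F E⦄, V ≤ W → ρ V ≤ ρ W) ∧
  (∀ V W : Submodule F E, ρ (V ⊔ W) + ρ (V ⊓ W) ≤ ρ V + ρ W)

variable {F}

/-- Independent spaces. -/
def Indep (ρ : Submodule F E → ℕ) (V : Submodule F E) : Prop := ρ V = finrank F V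

/-- Circuits: dependent spaces all of whose proper subspaces are independent. -/
def IsCircuit (ρ : Submodule F E → ℕ) (C : Submodule F E) : Prop :=
  ¬ Indep ρ C ∧ ∀ D : Submodule F E, D < C → Indep ρ D

/-- Open spaces: sums of circuits. -/
def IsOpenSp (ρ : Submodule F E → ℕ) (V : Submodule F E) : Prop :=
  ∃ S : Set (Submodule F E), (∀ C ∈ S, IsCircuit ρ C) ∧ V = sSup S

/-- The cyclic core: the sum of all circuits contained in `V`. -/
def cyc (ρ : Submodule F E → ℕ) (V : Submodule F E) : Submodule F E :=
  sSup {C : Submodule F E | IsCircuit ρ C ∧ C ≤ V}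

/-- The closure operator: the sum of all `⟨x⟩` with `ρ(V + ⟨x⟩) = ρ V`. -/
def cl (ρ : Submodule F E → ℕ) (V : Submodule F E) : Submodule F E :=
  sSup {W : Submodule F E | ∃ x : E, ρ (V ⊔ span F {x}) = ρ V ∧ W = span F {x}}

/-- Flats. -/
def IsFlat (ρ : Submodule F E → ℕ) (V : Submodule F E) : Prop :=
  ∀ x : E, x ∉ V → ρ V < ρ (V ⊔ span F {x})

/-- Cyclic flats. -/
def CyclicFlat (ρ : Submodule F E → ℕ) (V : Submodule F E) : Prop :=
  IsFlat ρ V ∧ IsOpenSp ρ V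

end QM

namespace QM

variable {F E : Type*} [Field F] [AddCommGroup E] [Module F E] {ρ : Submodule F E → ℕ}

theorem IsRkFn.le_finrank (hρ : IsRkFn F ρ) (V : Submodule F E) : ρ V ≤ finrank F V :=
  hρ.1 V

theorem IsRkFn.mono (hρ : IsRkFn F ρ) {V W : Submodule F E} (h : V ≤ W) : ρ V ≤ ρ W :=
  hρ.2.1 h

theorem IsRkFn.submod (hρ : IsRkFn F ρ) (V W : Submodule F E) :
    ρ (V ⊔ W) + ρ (V ⊓ W) ≤ ρ V + ρ W :=
  hρ.2.2 V W

theorem IsRkFn.indep_bot (hρ : IsRkFn F ρ) : Indep ρ ⊥ := by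
  have h := hρ.le_finrank ⊥
  rw [finrank_bot] at h
  rw [Indep, finrank_bot]
  omega

theorem IsRkFn.rk_lt_finrank (hρ : IsRkFn F ρ) {V : Submodule F E} (hV : ¬ Indep ρ V) :
    ρ V < finrank F V :=
  (hρ.le_finrank V).lt_of_ne hV

/-- Submodularity against `A ⊔ U` and `W`, whose meet contains `A`. -/
theorem IsRkFn.rk_sup_eq_of_le (hρ : IsRkFn F ρ) {A W U : Submodule F E} (hAW : A ≤ W)
    (h : ρ (A ⊔ U) = ρ A) : ρ (W ⊔ U) = ρ W := by
  have hsub := hρ.submod W (A ⊔ U)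
  rw [← sup_assoc, sup_eq_left.mpr hAW] at hsub
  have hA := hρ.mono (le_inf hAW le_sup_left : A ≤ W ⊓ (A ⊔ U))
  have hW := hρ.mono (le_sup_left : W ≤ W ⊔ U)
  omega

theorem IsFlat.mem_of_rk_sup_eq {W : Submodule F E} (hW : IsFlat ρ W) {x : E}
    (h : ρ (W ⊔ span F {x}) = ρ W) : x ∈ W :=
  by_contra fun hx => (hW x hx).ne' h

theorem cyc_le (V : Submodule F E) : cyc ρ V ≤ V :=
  sSup_le fun _ hC => hC.2

theorem isOpenSp_cyc (V : Submodule F E) : IsOpenSp ρ (cyc ρ V) :=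
  ⟨_, fun _ hC => hC.1, rfl⟩

theorem IsCircuit.le_cyc {C V : Submodule F E} (hC : IsCircuit ρ C) (hCV : C ≤ V) :
    C ≤ cyc ρ V :=
  le_sSup ⟨hC, hCV⟩

variable [FiniteDimensional F E]

theorem IsRkFn.rk_add_finrank_le (hρ : IsRkFn F ρ) {V W : Submodule F E} (hWV : W ≤ V) :
    ρ V + finrank F W ≤ ρ W + finrank F V := by
  obtain ⟨⟨W', hW'V⟩, hW'⟩ := exists_isCompl (⟨W, hWV⟩ : Set.Iic V)
  have hsup : W ⊔ W' = V := congrArg Subtype.val hW'.sup_eq_top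
  have hinf : W ⊓ W' = ⊥ := congrArg Subtype.val hW'.inf_eq_bot
  have hρsub := hρ.submod W W'
  have hdim := Submodule.finrank_sup_add_finrank_inf_eq W W'
  rw [hsup, hinf, finrank_bot] at hdim
  rw [hsup] at hρsub
  have := hρ.le_finrank W'
  omega

theorem IsRkFn.indep_of_le (hρ : IsRkFn F ρ) {V W : Submodule F E} (hWV : W ≤ V)
    (hV : Indep ρ V) : Indep ρ W := by
  have := hρ.rk_add_finrank_le hWV
  have := hρ.le_finrank W
  rw [Indep] at hV ⊢
  omega

theorem IsRkFn.indep_sup_span_of_rk_lt (hρ : IsRkFn F ρ) {I : Submodule F E} (hI : Indep ρ I)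
    {x : E} (h : ρ I < ρ (I ⊔ span F {x})) : Indep ρ (I ⊔ span F {x}) := by
  have hx : finrank F (span F ({x} : Set E)) ≤ 1 :=
    (finrank_span_le_card ({x} : Set E)).trans (by simp)
  have := Submodule.finrank_add_le_finrank_add_finrank I (span F {x})
  have := hρ.le_finrank (I ⊔ span F {x})
  rw [Indep] at hI ⊢
  omega

theorem exists_isCircuit_le {B : Submodule F E} (hB : ¬ Indep ρ B) :
    ∃ C, IsCircuit ρ C ∧ C ≤ B := by
  obtain ⟨C, hCB, hC⟩ := exists_minimal_le_of_wellFoundedLT (fun D => ¬ Indep ρ D) B hB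
  exact ⟨C, ⟨hC.1, fun D hDC => by_contra fun hD => hDC.not_ge (hC.2 hD hDC.le)⟩, hCB⟩

/-- A maximal extension of `V` of the same rank is a flat. -/
theorem IsRkFn.exists_isFlat_ge_rk_eq (hρ : IsRkFn F ρ) (V : Submodule F E) :
    ∃ W, V ≤ W ∧ IsFlat ρ W ∧ ρ W = ρ V := by
  obtain ⟨W, -, ⟨hVW, hW⟩, hmax⟩ :=
    exists_maximal_ge_of_wellFoundedGT (fun W => V ≤ W ∧ ρ W = ρ V) V ⟨le_rfl, rfl⟩
  refine ⟨W, hVW, fun x hx => (hρ.mono le_sup_left).lt_of_ne fun h => hx ?_, hW⟩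
  have hle : W ⊔ span F {x} ≤ W := hmax ⟨hVW.trans le_sup_left, h ▸ hW⟩ le_sup_left
  exact (span_singleton_le_iff_mem x W).mp (le_sup_right.trans hle)

/-- A maximal independent subspace `I` of `A` does not grow in rank by any vector of `A`, so `A`
lies in the flat spanned by `I`. -/
theorem IsRkFn.exists_indep_le_rk_eq (hρ : IsRkFn F ρ) (A : Submodule F E) :
    ∃ I ≤ A, Indep ρ I ∧ ρ I = ρ A := by
  obtain ⟨I, -, ⟨hIA, hI⟩, hmax⟩ :=
    exists_maximal_ge_of_wellFoundedGT (fun I => I ≤ A ∧ Indep ρ I) ⊥ ⟨bot_le, hρ.indep_bot⟩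
  have hstep : ∀ a ∈ A, ρ (I ⊔ span F {a}) = ρ I := by
    intro a ha
    by_contra hne
    have hlt := (hρ.mono le_sup_left).lt_of_ne (Ne.symm hne)
    have haI : I ⊔ span F {a} ≤ I :=
      hmax ⟨sup_le hIA ((span_singleton_le_iff_mem a A).mpr ha),
        hρ.indep_sup_span_of_rk_lt hI hlt⟩ le_sup_left
    exact hne (by rw [sup_eq_left.mpr (le_sup_right.trans haI)])
  obtain ⟨W, hIW, hW, hWrk⟩ := hρ.exists_isFlat_ge_rk_eq I
  have hAW : A ≤ W := fun a ha => hW.mem_of_rk_sup_eq (hρ.rk_sup_eq_of_le hIW (hstep a ha))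
  exact ⟨I, hIA, hI, le_antisymm (hρ.mono hIA) (hWrk ▸ hρ.mono hAW)⟩

/-- Adding to a basis `I` of `A` a vector `x ∉ A` that does not raise the rank gives a dependent
space, and a circuit inside it cannot lie in `A`, since `(I ⊔ ⟨x⟩) ⊓ A = I`. -/
theorem IsRkFn.exists_isCircuit_le_sup_not_le (hρ : IsRkFn F ρ) {A : Submodule F E} {x : E}
    (hx : x ∉ A) (h : ρ (A ⊔ span F {x}) = ρ A) :
    ∃ C, IsCircuit ρ C ∧ C ≤ A ⊔ span F {x} ∧ ¬ C ≤ A := by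
  obtain ⟨I, hIA, hI, hIrk⟩ := hρ.exists_indep_le_rk_eq A
  have hIJ : I < I ⊔ span F {x} :=
    left_lt_sup.mpr fun hxI => hx (hIA ((span_singleton_le_iff_mem x I).mp hxI))
  have hJ : ¬ Indep ρ (I ⊔ span F {x}) := by
    have := Submodule.finrank_lt_finrank_of_lt hIJ
    have := hρ.mono (sup_le_sup_right hIA (span F {x}))
    rw [Indep] at hI ⊢
    omega
  obtain ⟨C, hC, hCJ⟩ := exists_isCircuit_le hJ
  refine ⟨C, hC, hCJ.trans (sup_le_sup_right hIA _), fun hCA => hC.1 (hρ.indep_of_le ?_ hI)⟩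
  have hdisj : span F {x} ⊓ A = ⊥ :=
    disjoint_iff.mp ((disjoint_span_singleton' (ne_of_mem_of_not_mem A.zero_mem hx).symm).mpr
      hx).symm
  calc C ≤ (I ⊔ span F {x}) ⊓ A := le_inf hCJ hCA
    _ = I := by rw [sup_inf_assoc_of_le _ hIA, hdisj, sup_bot_eq]

theorem IsRkFn.isFlat_cyc (hρ : IsRkFn F ρ) {W : Submodule F E} (hW : IsFlat ρ W) :
    IsFlat ρ (cyc ρ W) := by
  intro x hx
  refine (hρ.mono le_sup_left).lt_of_ne fun h => ?_
  have hxW : x ∈ W := hW.mem_of_rk_sup_eq (hρ.rk_sup_eq_of_le (cyc_le W) h.symm)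
  obtain ⟨C, hC, hCle, hCA⟩ := hρ.exists_isCircuit_le_sup_not_le hx h.symm
  exact hCA (hC.le_cyc (hCle.trans (sup_le (cyc_le W) ((span_singleton_le_iff_mem x W).mpr hxW))))

theorem IsRkFn.exists_cyclicFlat_ge_rk_le (hρ : IsRkFn F ρ) {C : Submodule F E}
    (hC : IsCircuit ρ C) : ∃ Z, CyclicFlat ρ Z ∧ C ≤ Z ∧ ρ Z ≤ ρ C := by
  obtain ⟨W, hCW, hW, hWrk⟩ := hρ.exists_isFlat_ge_rk_eq C
  exact ⟨cyc ρ W, ⟨hρ.isFlat_cyc hW, isOpenSp_cyc W⟩, hC.le_cyc hCW, hWrk ▸ hρ.mono (cyc_le W)⟩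

end QM

namespace QM

variable {F E : Type*} [Field F] [Fintype F] [AddCommGroup E] [Module F E]
  [FiniteDimensional F E]

theorem stmt9 (ρ : Submodule F E → ℕ) (hρ : IsRkFn F ρ) (V : Submodule F E) :
    Indep ρ V ↔ ∀ Z : Submodule F E, CyclicFlat ρ Z → finrank F ↥(V ⊓ Z) ≤ ρ Z := by
  refine ⟨fun hV Z _ => ?_, fun h => by_contra fun hV => ?_⟩
  · rw [← hρ.indep_of_le inf_le_left hV]
    exact hρ.mono inf_le_right
  · obtain ⟨C, hC, hCV⟩ := exists_isCircuit_le hV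
    obtain ⟨Z, hZ, hCZ, hZC⟩ := hρ.exists_cyclicFlat_ge_rk_le hC
    have := h Z hZ
    have := Submodule.finrank_mono (le_inf hCV hCZ)
    have := hρ.rk_lt_finrank hC.1
    omega

end QM
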